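/- arXiv:1005.0988 — 6 statements merged into one kernel-verified Lean document; each statement's English description precedes it below -/
import Mathlib

section
/- For any graph G, the 2-rainbow domination number of G equals the domination number of the Cartesian product of G with K₂. -/
open Finset

/-- A `k`-rainbow dominating function: every vertex assigned `∅` sees all `k` colors
among its neighbors. -/
def SimpleGraph.IsRainbowDF {V : Type*} {k : ℕ} (G : SimpleGraph V)
    (f : V → Finset (Fin k)) : Prop :=
  ∀ v, f v = ∅ → ∀ c : Fin k, ∃ u, G.Adj v u ∧ c ∈ f u

/-- The `k`-rainbow domination number. -/
noncomputable def SimpleGraph.rainbowNum {V : Type*} [Fintype V] (G : SimpleGraph V)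
    (k : ℕ) : ℕ :=
  sInf {w | ∃ f : V → Finset (Fin k), G.IsRainbowDF f ∧ w = ∑ v, (f v).card}

/-- `S` is a dominating set of `G`. -/
def SimpleGraph.IsDomSet {V : Type*} (G : SimpleGraph V) (S : Set V) : Prop :=
  ∀ v, v ∉ S → ∃ u ∈ S, G.Adj v u

/-- The domination number. -/
noncomputable def SimpleGraph.domNum {V : Type*} [Fintype V] (G : SimpleGraph V) : ℕ :=
  sInf {n | ∃ S : Finset V, G.IsDomSet ↑S ∧ n = S.card}

/-! A function `f : V → Finset (Fin k)` is the same thing as the subset `{(v, c) | c ∈ f v}` of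
`V × Fin k`, and its weight is the size of that subset. Under this correspondence `f` is `k`-rainbow
dominating iff the subset dominates `G □ Kₖ`: a vertex `(v, c)` outside it with `f v ≠ ∅` is
dominated within its `Kₖ`-fibre, while for `f v = ∅` it can only be dominated by some `(u, c)` with
`u` adjacent to `v`, i.e. by a neighbour of `v` carrying colour `c`. -/

namespace Finset

variable {α β : Type*} [Fintype α] [Fintype β] [DecidableEq α] [DecidableEq β]

def prodEquivFunFinset : Finset (α × β) ≃ (α → Finset β) where
  toFun S a := univ.filter fun b => (a, b) ∈ S
  invFun f := univ.filter fun p => p.2 ∈ f p.1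
  left_inv S := by ext; simp
  right_inv f := by ext; simp

@[simp]
theorem mem_prodEquivFunFinset_symm {f : α → Finset β} {p : α × β} :
    p ∈ prodEquivFunFinset.symm f ↔ p.2 ∈ f p.1 := by
  simp [prodEquivFunFinset]

theorem card_prodEquivFunFinset_symm (f : α → Finset β) :
    #(prodEquivFunFinset.symm f) = ∑ a, #(f a) := by
  simp only [prodEquivFunFinset, Equiv.coe_fn_symm_mk, card_filter, Fintype.sum_prod_type]
  simp

end Finset

namespace SimpleGraph

variable {V : Type*} (G : SimpleGraph V)

theorem isDomSet_boxProd_top_iff_isRainbowDF {k : ℕ} (f : V → Finset (Fin k)) :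
    (G □ (⊤ : SimpleGraph (Fin k))).IsDomSet {p | p.2 ∈ f p.1} ↔ G.IsRainbowDF f := by
  constructor
  · intro hS v hv c
    obtain ⟨⟨u, d⟩, hd, hadj⟩ := hS (v, c) (by simp [hv])
    rcases hadj with ⟨hvu, rfl⟩ | ⟨-, rfl⟩
    · exact ⟨u, hvu, hd⟩
    · simp [hv] at hd
  · rintro hf ⟨v, c⟩ hc
    by_cases hv : f v = ∅
    · obtain ⟨u, hvu, hcu⟩ := hf v hv c
      exact ⟨(u, c), hcu, Or.inl ⟨hvu, rfl⟩⟩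
    · obtain ⟨d, hd⟩ := nonempty_iff_ne_empty.mpr hv
      exact ⟨(v, d), hd, Or.inr ⟨fun hcd : c = d => hc (hcd ▸ hd : c ∈ f v), rfl⟩⟩

theorem rainbowNum_eq_domNum_boxProd_top [Fintype V] (k : ℕ) :
    G.rainbowNum k = (G □ (⊤ : SimpleGraph (Fin k))).domNum := by
  classical
  unfold rainbowNum domNum
  congr 1
  ext w
  show (∃ f, _) ↔ ∃ S, _
  rw [prodEquivFunFinset.exists_congr_left]
  refine exists_congr fun f => ?_
  have hcoe : (↑(prodEquivFunFinset.symm f) : Set (V × Fin k)) = {p | p.2 ∈ f p.1} := by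
    ext; simp
  rw [hcoe, isDomSet_boxProd_top_iff_isRainbowDF, card_prodEquivFunFinset_symm]

end SimpleGraph

/-- The 2-rainbow domination number of `G` equals the domination number of `G □ K₂`. -/
theorem rainbow2_eq_domNum_boxProd_K2 {V : Type*} [Fintype V] (G : SimpleGraph V) :
    G.rainbowNum 2 = (G.boxProd (⊤ : SimpleGraph (Fin 2))).domNum :=
  G.rainbowNum_eq_domNum_boxProd_top 2
end

section
/- For any graph G, γ(G) ≤ γ_{r2}(G) ≤ γ_R(G) ≤ 2γ(G), where γ_R is the Roman domination number. -/
open Finset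

/-- A Roman dominating function: values in `{0,1,2}` and every vertex with value `0`
has a neighbor with value `2`. -/
def SimpleGraph.IsRomanDF {V : Type*} (G : SimpleGraph V) (g : V → ℕ) : Prop :=
  (∀ v, g v ≤ 2) ∧ ∀ v, g v = 0 → ∃ u, G.Adj v u ∧ g u = 2

/-- The Roman domination number. -/
noncomputable def SimpleGraph.romanNum {V : Type*} [Fintype V] (G : SimpleGraph V) : ℕ :=
  sInf {w | ∃ g : V → ℕ, G.IsRomanDF g ∧ w = ∑ v, g v}

/-- `γ(G) ≤ γ_{r2}(G) ≤ γ_R(G) ≤ 2γ(G)`. -/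
theorem domNum_le_rainbow2_le_romanNum_le_two_mul_domNum {V : Type*} [Fintype V]
    (G : SimpleGraph V) :
    G.domNum ≤ G.rainbowNum 2 ∧ G.rainbowNum 2 ≤ G.romanNum ∧
      G.romanNum ≤ 2 * G.domNum := by
  classical
  have hrne : {w | ∃ f : V → Finset (Fin 2), G.IsRainbowDF f ∧ w = ∑ v, (f v).card}.Nonempty :=
    ⟨_, (fun _ : V => (Finset.univ : Finset (Fin 2))), fun v h => absurd h Finset.univ_nonempty.ne_empty, rfl⟩
  have hRne : {w | ∃ g : V → ℕ, G.IsRomanDF g ∧ w = ∑ v, g v}.Nonempty :=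
    ⟨_, (fun _ : V => 2), ⟨fun _ => le_refl 2, fun v h => by simp at h⟩, rfl⟩
  have hdne : {n | ∃ S : Finset V, G.IsDomSet ↑S ∧ n = S.card}.Nonempty :=
    ⟨_, Finset.univ, fun v hv => absurd (Finset.mem_coe.mpr (Finset.mem_univ v)) hv, rfl⟩
  refine ⟨?_, ?_, ?_⟩
  · -- γ ≤ γ_r2
    apply le_csInf hrne
    rintro w ⟨f, hf, rfl⟩
    set S : Finset V := Finset.univ.filter (fun v => f v ≠ ∅) with hS
    have hdom : G.IsDomSet ↑S := by
      intro v hv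
      have hfv : f v = ∅ := by
        by_contra h
        exact hv (by simp [hS, h])
      obtain ⟨u, hadj, hc⟩ := hf v hfv 0
      exact ⟨u, by simp [hS]; exact fun h => by simp [h] at hc, hadj⟩
    have hcard : S.card ≤ ∑ v, (f v).card := by
      calc S.card = ∑ v ∈ S, 1 := by simp
        _ ≤ ∑ v ∈ S, (f v).card := by
            apply Finset.sum_le_sum
            intro v hv
            have : f v ≠ ∅ := by simpa [hS] using hv
            exact Nat.one_le_iff_ne_zero.mpr (by simpa [Finset.card_eq_zero] using this)
        _ ≤ ∑ v, (f v).card := Finset.sum_le_sum_of_subset (Finset.subset_univ S)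
    exact le_trans (Nat.sInf_le ⟨S, hdom, rfl⟩) hcard
  · -- γ_r2 ≤ γ_R
    apply le_csInf hRne
    rintro w ⟨g, ⟨hle, hg⟩, rfl⟩
    set f : V → Finset (Fin 2) := fun v =>
      if g v = 2 then Finset.univ else if g v = 1 then {0} else ∅ with hfdef
    have hrdf : G.IsRainbowDF f := by
      intro v hv c
      have hg0 : g v = 0 := by
        have h2 := hle v
        by_contra h
        interval_cases h' : g v
        · exact h rfl
        · simp [hfdef, h'] at hv
        · exact Finset.univ_nonempty.ne_empty (by simpa [hfdef, h'] using hv)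
      obtain ⟨u, hadj, hu2⟩ := hg v hg0
      exact ⟨u, hadj, by simp [hfdef, hu2]⟩
    have hcard : ∀ v, (f v).card ≤ g v := by
      intro v
      have := hle v
      interval_cases h' : g v <;> simp [hfdef, h']
    exact le_trans (Nat.sInf_le ⟨f, hrdf, rfl⟩) (Finset.sum_le_sum fun v _ => hcard v)
  · -- γ_R ≤ 2γ
    obtain ⟨S, hS, hcard⟩ := Nat.sInf_mem hdne
    set g : V → ℕ := fun v => if v ∈ S then 2 else 0 with hgdef
    have hrdf : G.IsRomanDF g := by
      refine ⟨fun v => by by_cases h : v ∈ S <;> simp [hgdef, h], ?_⟩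
      intro v hv
      have hvS : v ∉ S := by
        by_contra h
        simp [hgdef, h] at hv
      obtain ⟨u, huS, hadj⟩ := hS v hvS
      exact ⟨u, hadj, by simp [hgdef]; exact Finset.mem_coe.mp huS⟩
    have hsum : ∑ v, g v = 2 * S.card := by
      simp only [hgdef]
      rw [Finset.sum_ite_mem, Finset.univ_inter, Finset.sum_const, smul_eq_mul, Nat.mul_comm]
    calc G.romanNum ≤ ∑ v, g v := Nat.sInf_le ⟨g, hrdf, rfl⟩
      _ = 2 * S.card := hsum
      _ = 2 * G.domNum := by rw [SimpleGraph.domNum, ← hcard]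
end

section
/- For any graphs G and H, γ_R(G □ H) ≥ γ(G)·γ(H), where γ_R denotes the Roman domination number and □ the Cartesian product. -/
open Finset

/-!
Fix a minimum dominating set `U` of `G` and send every vertex `v` to some `p v ∈ U` with `v`
equal or adjacent to `p v`; this cuts `V` into the cells `p ⁻¹' {u}`, `u ∈ U`. Let `f` be a
minimum Roman dominating function of `G □ H`. Call the cell of `u` covered in the row `h` if
`f (·, h)` is positive somewhere on the cell, or every vertex of the cell has a `G`-neighbour
`w` with `f (w, h) = 2`. For each `u ∈ U` the rows where the cell of `u` is covered dominate
`H`, so there are at least `γ(H)` of them. In a single row, the covered cells of the first kind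
are at most the number of positive entries, and those of the second kind are at most the
number of `2`-entries, because trading them for the `2`-vertices of the row keeps a dominating
set of `G` and `U` is minimum. Summing over the rows gives `|U| γ(H) ≤ Σ f`.
-/

open scoped Classical in
theorem Finset.card_filter_exists_apply_eq_le {α β : Type*} (s : Finset α) (U : Finset β)
    (p : α → β) (q : α → Prop) [DecidablePred q] :
    #{u ∈ U | ∃ a ∈ s, p a = u ∧ q a} ≤ #{a ∈ s | q a} := by
  refine (card_le_card (t := {a ∈ s | q a}.image p) fun u hu => ?_).trans card_image_le
  obtain ⟨a, ha, rfl, hq⟩ := (mem_filter.mp hu).2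
  exact mem_image_of_mem p (mem_filter.mpr ⟨ha, hq⟩)

theorem Finset.sum_eq_card_filter_add_card_filter_of_le_two {α : Type*} (s : Finset α)
    {g : α → ℕ} (hg : ∀ a ∈ s, g a ≤ 2) :
    ∑ a ∈ s, g a = #{a ∈ s | 1 ≤ g a} + #{a ∈ s | g a = 2} := by
  rw [card_filter, card_filter, ← sum_add_distrib]
  refine sum_congr rfl fun a ha => ?_
  have := hg a ha
  split_ifs <;> omega

namespace SimpleGraph

variable {V : Type*} (G : SimpleGraph V)

theorem exists_isDomSet_card_eq_domNum [Fintype V] :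
    ∃ S : Finset V, G.IsDomSet ↑S ∧ #S = G.domNum := by
  obtain ⟨S, hS, hcard⟩ := Nat.sInf_mem (s := {n | ∃ S : Finset V, G.IsDomSet ↑S ∧ n = #S})
    ⟨#(univ : Finset V), univ, fun v hv => absurd (mem_coe.mpr (mem_univ v)) hv, rfl⟩
  exact ⟨S, hS, hcard.symm⟩

theorem domNum_le_card [Fintype V] {S : Finset V} (hS : G.IsDomSet ↑S) : G.domNum ≤ #S :=
  Nat.sInf_le ⟨S, hS, rfl⟩

theorem exists_isRomanDF_sum_eq_romanNum [Fintype V] :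
    ∃ g : V → ℕ, G.IsRomanDF g ∧ ∑ v, g v = G.romanNum := by
  obtain ⟨g, hg, hsum⟩ := Nat.sInf_mem (s := {w | ∃ g : V → ℕ, G.IsRomanDF g ∧ w = ∑ v, g v})
    ⟨∑ _v : V, 2, fun _ => 2, ⟨fun _ => le_rfl, fun _ h => absurd h two_ne_zero⟩, rfl⟩
  exact ⟨g, hg, hsum.symm⟩

theorem IsDomSet.exists_retraction {S : Set V} (hS : G.IsDomSet S) :
    ∃ p : V → V, (∀ v, p v ∈ S) ∧ ∀ v, v = p v ∨ G.Adj v (p v) := by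
  have hex : ∀ v, ∃ u ∈ S, v = u ∨ G.Adj v u := fun v => by
    by_cases hv : v ∈ S
    · exact ⟨v, hv, Or.inl rfl⟩
    · obtain ⟨u, hu, hadj⟩ := hS v hv
      exact ⟨u, hu, Or.inr hadj⟩
  choose p hpS hp using hex
  exact ⟨p, hpS, hp⟩

def CellCovered (p : V → V) (g : V → ℕ) (u : V) : Prop :=
  (∃ v, p v = u ∧ 1 ≤ g v) ∨ ∀ v, p v = u → ∃ w, G.Adj v w ∧ g w = 2

open scoped Classical in
theorem card_filter_forall_exists_adj_le [Fintype V] {U T : Finset V}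
    (hUmin : #U ≤ G.domNum) {p : V → V} (hpU : ∀ v, p v ∈ U)
    (hp : ∀ v, v = p v ∨ G.Adj v (p v)) :
    #{u ∈ U | ∀ v, p v = u → ∃ w ∈ T, G.Adj v w} ≤ #T := by
  set Z := {u ∈ U | ∀ v, p v = u → ∃ w ∈ T, G.Adj v w}
  have hdom : G.IsDomSet ↑(U \ Z ∪ T) := by
    intro v hv
    by_cases hvZ : p v ∈ Z
    · obtain ⟨w, hwT, hadj⟩ := (mem_filter.mp hvZ).2 v rfl
      exact ⟨w, by simp [hwT], hadj⟩
    · have hpv : p v ∈ U \ Z ∪ T := mem_union_left _ (mem_sdiff.mpr ⟨hpU v, hvZ⟩)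
      rcases hp v with heq | hadj
      · exact absurd (heq ▸ mem_coe.mpr hpv) hv
      · exact ⟨p v, hpv, hadj⟩
  have hZU : Z ⊆ U := filter_subset _ _
  have hcard := (G.domNum_le_card hdom).trans (card_union_le _ _)
  rw [card_sdiff_of_subset hZU] at hcard
  have := card_le_card hZU
  omega

open scoped Classical in
theorem card_filter_cellCovered_le_sum [Fintype V] {U : Finset V} (hUmin : #U ≤ G.domNum)
    {p : V → V} (hpU : ∀ v, p v ∈ U) (hp : ∀ v, v = p v ∨ G.Adj v (p v)) {g : V → ℕ}
    (hg : ∀ v, g v ≤ 2) :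
    #{u ∈ U | G.CellCovered p g u} ≤ ∑ v, g v := by
  have hpos : #{u ∈ U | ∃ v, p v = u ∧ 1 ≤ g v} ≤ #{v | 1 ≤ g v} := by
    convert card_filter_exists_apply_eq_le univ U p (1 ≤ g ·) using 3
    simp
  have htwo : #{u ∈ U | ∀ v, p v = u → ∃ w, G.Adj v w ∧ g w = 2} ≤ #{v | g v = 2} := by
    simpa [and_comm] using
      G.card_filter_forall_exists_adj_le (T := {v | g v = 2}) hUmin hpU hp
  rw [sum_eq_card_filter_add_card_filter_of_le_two univ fun v _ => hg v]
  have hsub : {u ∈ U | G.CellCovered p g u} ⊆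
      {u ∈ U | ∃ v, p v = u ∧ 1 ≤ g v} ∪ {u ∈ U | ∀ v, p v = u → ∃ w, G.Adj v w ∧ g w = 2} := by
    intro u hu
    obtain ⟨huU, hcov | hcov⟩ := mem_filter.mp hu
    · exact mem_union_left _ (mem_filter.mpr ⟨huU, hcov⟩)
    · exact mem_union_right _ (mem_filter.mpr ⟨huU, hcov⟩)
  exact (card_le_card hsub).trans ((card_union_le _ _).trans (add_le_add hpos htwo))

variable {G} {W : Type*} {H : SimpleGraph W}

open scoped Classical in
theorem IsRomanDF.isDomSet_cellCovered [Fintype W] {f : V × W → ℕ} (hf : (G □ H).IsRomanDF f)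
    (p : V → V) (u : V) :
    H.IsDomSet ↑({h | G.CellCovered p (fun v => f (v, h)) u} : Finset W) := by
  intro h hh
  have hunc : ¬ G.CellCovered p (fun v => f (v, h)) u := fun hc =>
    hh (mem_coe.mpr (mem_filter.mpr ⟨mem_univ _, hc⟩))
  simp only [CellCovered, not_or, not_exists, not_and, not_forall] at hunc
  obtain ⟨hzero, v, hv, hno2⟩ := hunc
  have hfv : f (v, h) = 0 := by have := hzero v hv; omega
  -- The Roman condition at `(v, h)` cannot be met inside the row, so it is met in the column.
  obtain ⟨⟨x, h'⟩, hadj, hx2⟩ := hf.2 (v, h) hfv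
  rcases boxProd_adj.mp hadj with ⟨hGadj, hrow : h = h'⟩ | ⟨hHadj, hcol : v = x⟩
  · exact absurd (hrow ▸ hx2) (hno2 x hGadj)
  · refine ⟨h', mem_coe.mpr (mem_filter.mpr ⟨mem_univ _, Or.inl ⟨v, hv, ?_⟩⟩), hHadj⟩
    show 1 ≤ f (v, h')
    rw [hcol, hx2]
    exact one_le_two

end SimpleGraph

/-- `γ_R(G □ H) ≥ γ(G)·γ(H)`. -/
theorem domNum_mul_domNum_le_romanNum_boxProd {V W : Type*} [Fintype V] [Fintype W]
    (G : SimpleGraph V) (H : SimpleGraph W) :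
    G.domNum * H.domNum ≤ (G.boxProd H).romanNum := by
  classical
  obtain ⟨U, hU, hUcard⟩ := G.exists_isDomSet_card_eq_domNum
  obtain ⟨p, hpU, hp⟩ := hU.exists_retraction
  obtain ⟨f, hf, hfsum⟩ := (G.boxProd H).exists_isRomanDF_sum_eq_romanNum
  calc G.domNum * H.domNum = ∑ _u ∈ U, H.domNum := by rw [sum_const, smul_eq_mul, hUcard]
    _ ≤ ∑ u ∈ U, #{h | G.CellCovered p (fun v => f (v, h)) u} :=
        sum_le_sum fun u _ => H.domNum_le_card (hf.isDomSet_cellCovered p u)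
    _ = ∑ h, #{u ∈ U | G.CellCovered p (fun v => f (v, h)) u} :=
        sum_card_bipartiteAbove_eq_sum_card_bipartiteBelow _
    _ ≤ ∑ h, ∑ v, f (v, h) := sum_le_sum fun h _ =>
        G.card_filter_cellCovered_le_sum hUcard.le hpU hp fun v => hf.1 (v, h)
    _ = (G.boxProd H).romanNum := by rw [← Fintype.sum_prod_type_right, hfsum]
end

section
/- If G is a spider of order n ≥ 3, then γ_{r2}(G) ≤ 3n/4, with equality if and only if G is a path on four vertices. -/
open Finset

/-- A spider with center `c`: a tree obtained from a star `K_{1,t}` (`t ≥ 2`) by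
subdividing some of its edges, each at most once. Equivalently: a tree in which every
vertex is within distance 2 of `c`, every vertex other than `c` has degree at most 2,
every vertex at distance 2 from `c` is a leaf, and `c` has degree at least 2. -/
def SimpleGraph.IsSpider {V : Type*} [Fintype V] (G : SimpleGraph V)
    [DecidableRel G.Adj] (c : V) : Prop :=
  G.IsTree ∧ 2 ≤ G.degree c ∧
    ∀ v, v ≠ c → G.degree v ≤ 2 ∧ G.dist c v ≤ 2 ∧ (G.dist c v = 2 → G.degree v = 1)

/-!
Let `A` be the set of vertices at distance 2 from the centre `c` (the feet of the subdivided
legs) and `P` the set of unsubdivided legs. Then `n = 1 + deg c + |A|`, and `|A| + |P| ≤ deg c`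
because every foot hangs from a leg of degree 2. Labelling `c` by `{1, 2}` and every foot by `{1}`
shows `γ_{r2} ≤ 2 + |A|`; labelling `c` by `{2}` and every foot and unsubdivided leg by `{1}` shows
`γ_{r2} ≤ 1 + |A| + |P|`. As `deg c ≥ 2`, the smaller bound is at most `3n/4`, with equality only
when `|A| = |P| = 1` and `n = 4`, which forces `G ≅ P₄`; conversely `γ_{r2}(P₄) = 3`.
-/

namespace SimpleGraph

section RainbowNum

variable {V W : Type*} {G : SimpleGraph V} {k : ℕ}

theorem IsRainbowDF.rainbowNum_le [Fintype V] {f : V → Finset (Fin k)} (hf : G.IsRainbowDF f) :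
    G.rainbowNum k ≤ ∑ v, (f v).card :=
  Nat.sInf_le ⟨f, hf, rfl⟩

theorem isRainbowDF_const_univ : G.IsRainbowDF fun _ => (Finset.univ : Finset (Fin k)) :=
  fun _ hv c => absurd (hv ▸ Finset.mem_univ c) (Finset.notMem_empty c)

theorem exists_isRainbowDF_rainbowNum_eq [Fintype V] (G : SimpleGraph V) (k : ℕ) :
    ∃ f : V → Finset (Fin k), G.IsRainbowDF f ∧ G.rainbowNum k = ∑ v, (f v).card :=
  Nat.sInf_mem (s := {w | ∃ f : V → Finset (Fin k), G.IsRainbowDF f ∧ w = ∑ v, (f v).card})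
    ⟨_, _, isRainbowDF_const_univ, rfl⟩

theorem le_rainbowNum [Fintype V] {m : ℕ}
    (h : ∀ f : V → Finset (Fin k), G.IsRainbowDF f → m ≤ ∑ v, (f v).card) :
    m ≤ G.rainbowNum k := by
  obtain ⟨f, hf, heq⟩ := G.exists_isRainbowDF_rainbowNum_eq k
  exact heq ▸ h f hf

theorem IsRainbowDF.comp_iso {H : SimpleGraph W} {f : W → Finset (Fin k)}
    (hf : H.IsRainbowDF f) (e : G ≃g H) : G.IsRainbowDF (f ∘ e) := by
  intro v hv c
  obtain ⟨u, hvu, hc⟩ := hf (e v) hv c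
  exact ⟨e.symm u, by simpa using e.symm.map_rel_iff'.mpr hvu, by simpa using hc⟩

theorem Iso.rainbowNum_le [Fintype V] [Fintype W] {H : SimpleGraph W} (e : G ≃g H) :
    G.rainbowNum k ≤ H.rainbowNum k := by
  obtain ⟨f, hf, heq⟩ := H.exists_isRainbowDF_rainbowNum_eq k
  calc G.rainbowNum k ≤ ∑ v, (f (e v)).card := (hf.comp_iso e).rainbowNum_le
    _ = H.rainbowNum k := by rw [heq]; exact e.toEquiv.sum_comp fun w => (f w).card

theorem Iso.rainbowNum_eq [Fintype V] [Fintype W] {H : SimpleGraph W} (e : G ≃g H) :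
    G.rainbowNum k = H.rainbowNum k :=
  le_antisymm e.rainbowNum_le e.symm.rainbowNum_le

theorem IsRainbowDF.le_sum_card_neighborFinset {f : V → Finset (Fin k)} (hf : G.IsRainbowDF f)
    {v : V} [Fintype (G.neighborSet v)] (hv : f v = ∅) :
    k ≤ ∑ u ∈ G.neighborFinset v, (f u).card := by
  classical
  have hcover : (Finset.univ : Finset (Fin k)) ⊆ (G.neighborFinset v).biUnion f := fun c _ => by
    obtain ⟨u, hvu, hc⟩ := hf v hv c
    exact Finset.mem_biUnion.mpr ⟨u, (G.mem_neighborFinset v u).mpr hvu, hc⟩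
  simpa using (Finset.card_le_card hcover).trans Finset.card_biUnion_le

end RainbowNum

instance (n : ℕ) : DecidableRel (pathGraph n).Adj := fun _ _ => decidable_of_iff' _ pathGraph_adj

theorem rainbowNum_pathGraph_four : (pathGraph 4).rainbowNum 2 = 3 := by
  refine le_antisymm ?_ (le_rainbowNum fun f hf => ?_)
  · have hf : (pathGraph 4).IsRainbowDF (![∅, {0, 1}, ∅, {0}] : Fin 4 → Finset (Fin 2)) := by
      unfold IsRainbowDF; decide
    exact hf.rainbowNum_le.trans_eq (by decide)
  · have hnbr (v : Fin 4) : #(f v) = 0 → 2 ≤ ∑ u ∈ (pathGraph 4).neighborFinset v, #(f u) :=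
      fun hv => hf.le_sum_card_neighborFinset (Finset.card_eq_zero.mp hv)
    have h₀ := hnbr 0
    have h₁ := hnbr 1
    have h₂ := hnbr 2
    have h₃ := hnbr 3
    rw [show (pathGraph 4).neighborFinset 0 = {1} by decide, Finset.sum_singleton] at h₀
    rw [show (pathGraph 4).neighborFinset 1 = {0, 2} by decide, Finset.sum_pair (by decide)] at h₁
    rw [show (pathGraph 4).neighborFinset 2 = {1, 3} by decide, Finset.sum_pair (by decide)] at h₂
    rw [show (pathGraph 4).neighborFinset 3 = {2} by decide, Finset.sum_singleton] at h₃
    rw [Fin.sum_univ_four]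
    omega

theorem nonempty_iso_pathGraph_four_of_adj {V : Type*} [Fintype V] {G : SimpleGraph V}
    (hcard : Fintype.card V = 4) {v₀ v₁ v₂ v₃ : V} (h₀₁ : G.Adj v₀ v₁) (h₁₂ : G.Adj v₁ v₂)
    (h₂₃ : G.Adj v₂ v₃) (h₀₂ : ¬G.Adj v₀ v₂) (h₀₃ : ¬G.Adj v₀ v₃) (h₁₃ : ¬G.Adj v₁ v₃) :
    Nonempty (G ≃g pathGraph 4) := by
  let g : Fin 4 → V := ![v₀, v₁, v₂, v₃]
  have hadj : ∀ i j, G.Adj (g i) (g j) ↔ (pathGraph 4).Adj i j := by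
    have := h₀₂ ∘ G.adj_symm
    have := h₀₃ ∘ G.adj_symm
    have := h₁₃ ∘ G.adj_symm
    intro i j
    fin_cases i <;> fin_cases j <;> simp_all [g, pathGraph_adj, h₀₁.symm, h₁₂.symm, h₂₃.symm]
  have htwin_free : ∀ i j : Fin 4, (∀ k, (pathGraph 4).Adj i k ↔ (pathGraph 4).Adj j k) → i = j := by
    decide
  have hinj : Function.Injective g := fun i j hij =>
    htwin_free i j fun k => by rw [← hadj, ← hadj, hij]
  have hbij : Function.Bijective g :=
    (Fintype.bijective_iff_injective_and_card g).mpr ⟨hinj, by simp [hcard]⟩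
  exact ⟨(RelIso.mk (Equiv.ofBijective g hbij) (hadj _ _)).symm⟩

theorem sum_card_ite_ite_eq {V : Type*} [Fintype V] [DecidableEq V] {α : Type*}
    {c : V} {A : Finset V} (hc : c ∉ A) (a b : Finset α) :
    ∑ v, (if v = c then a else if v ∈ A then b else ∅).card = a.card + #A * b.card := by
  rw [← Finset.add_sum_erase _ _ (Finset.mem_univ c), if_pos rfl]
  have hA : A ⊆ Finset.univ.erase c := fun v hv =>
    Finset.mem_erase.mpr ⟨fun hvc => hc (hvc ▸ hv), Finset.mem_univ v⟩
  calc a.card + ∑ v ∈ Finset.univ.erase c, (if v = c then a else if v ∈ A then b else ∅).card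
      = a.card + ∑ v ∈ Finset.univ.erase c, if v ∈ A then b.card else 0 := by
        refine congrArg _ (Finset.sum_congr rfl fun v hv => ?_)
        rw [if_neg (Finset.ne_of_mem_erase hv)]
        split_ifs <;> rfl
    _ = a.card + #A * b.card := by
        rw [Finset.sum_ite_mem, Finset.inter_eq_right.mpr hA, Finset.sum_const, smul_eq_mul]

theorem eq_of_adj_of_degree_le_two {V : Type*} [Fintype V] [DecidableEq V] {G : SimpleGraph V}
    [DecidableRel G.Adj] {u a b x : V} (hu : G.degree u ≤ 2) (ha : G.Adj u a) (hb : G.Adj u b)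
    (hx : G.Adj u x) (hxa : x ≠ a) (hxb : x ≠ b) : a = b := by
  by_contra hab
  have hsub : {x, a, b} ⊆ G.neighborFinset u := by
    intro y hy
    simp only [Finset.mem_insert, Finset.mem_singleton] at hy
    rcases hy with rfl | rfl | rfl <;> simpa
  have := Finset.card_le_card hsub
  rw [Finset.card_eq_three.mpr ⟨x, a, b, hxa, hxb, hab, rfl⟩, card_neighborFinset_eq_degree] at this
  omega

section Legs

variable {V : Type*} [Fintype V] [DecidableEq V] (G : SimpleGraph V) [DecidableRel G.Adj] (c : V)

/- For a spider with centre `c`, `farFinset` is the set of feet of the subdivided legs and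
`shortLegFinset` the set of unsubdivided legs. -/
def farFinset : Finset V := {v | v ≠ c ∧ ¬G.Adj c v}

def shortLegFinset : Finset V := {u ∈ G.neighborFinset c | ∀ v ∈ G.farFinset c, ¬G.Adj u v}

variable {G c}

theorem mem_farFinset {v : V} : v ∈ G.farFinset c ↔ v ≠ c ∧ ¬G.Adj c v := by
  simp [farFinset]

theorem mem_shortLegFinset {u : V} :
    u ∈ G.shortLegFinset c ↔ G.Adj c u ∧ ∀ v ∈ G.farFinset c, ¬G.Adj u v := by
  simp [shortLegFinset]

variable (G c)

theorem card_eq_one_add_degree_add_card_farFinset :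
    Fintype.card V = 1 + G.degree c + #(G.farFinset c) := by
  have hsplit : (Finset.univ : Finset V) = insert c (G.neighborFinset c ∪ G.farFinset c) := by
    ext v
    by_cases hvc : v = c <;> by_cases hcv : G.Adj c v <;> simp [hvc, hcv, mem_farFinset]
  have hdisj : Disjoint (G.neighborFinset c) (G.farFinset c) :=
    Finset.disjoint_left.mpr fun v hv hfar =>
      (mem_farFinset.mp hfar).2 ((G.mem_neighborFinset c v).mp hv)
  rw [← Finset.card_univ, hsplit, Finset.card_insert_of_notMem (by simp [mem_farFinset]),
    Finset.card_union_of_disjoint hdisj, card_neighborFinset_eq_degree]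
  omega

theorem rainbowNum_le_two_add_card_farFinset : G.rainbowNum 2 ≤ 2 + #(G.farFinset c) := by
  have hf : G.IsRainbowDF (k := 2) fun v => if v = c then {0, 1} else
      if v ∈ G.farFinset c then {0} else ∅ := by
    intro v hv col
    have hvc : v ≠ c := by rintro rfl; simp at hv
    have hcv : G.Adj c v := by by_contra h; simp [hvc, h, mem_farFinset] at hv
    exact ⟨c, hcv.symm, by fin_cases col <;> simp⟩
  refine hf.rainbowNum_le.trans_eq ?_
  rw [sum_card_ite_ite_eq (by simp [mem_farFinset])]
  simp

theorem rainbowNum_le_one_add_card_farFinset_add_card_shortLegFinset :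
    G.rainbowNum 2 ≤ 1 + #(G.farFinset c) + #(G.shortLegFinset c) := by
  have hf : G.IsRainbowDF (k := 2) fun v => if v = c then {1} else
      if v ∈ G.farFinset c ∪ G.shortLegFinset c then {0} else ∅ := by
    intro v hv
    have hvc : v ≠ c := by rintro rfl; simp at hv
    have hv' : v ∉ G.farFinset c ∪ G.shortLegFinset c := by intro h; simp [hvc, h] at hv
    obtain ⟨hvfar, hvshort⟩ := Finset.notMem_union.mp hv'
    have hcv : G.Adj c v := by simpa [hvc, mem_farFinset] using hvfar
    obtain ⟨w, hw, hvw⟩ : ∃ w ∈ G.farFinset c, G.Adj v w := by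
      simpa [hcv, mem_shortLegFinset] using hvshort
    refine Fin.forall_fin_two.mpr ⟨⟨w, hvw, ?_⟩, c, hcv.symm, by simp⟩
    simp [(mem_farFinset.mp hw).1, Finset.mem_union_left _ hw]
  calc G.rainbowNum 2 ≤ 1 + #(G.farFinset c ∪ G.shortLegFinset c) := by
        refine hf.rainbowNum_le.trans_eq ?_
        rw [sum_card_ite_ite_eq (by simp [mem_farFinset, mem_shortLegFinset])]
        simp
    _ ≤ 1 + #(G.farFinset c) + #(G.shortLegFinset c) := by
        rw [add_assoc]; exact Nat.add_le_add_left (Finset.card_union_le _ _) 1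

variable {G c}

theorem card_farFinset_add_card_shortLegFinset_le_degree
    (hfar : ∀ v ∈ G.farFinset c, ∃ u, G.Adj c u ∧ G.Adj u v)
    (hdeg : ∀ u, G.Adj c u → G.degree u ≤ 2) :
    #(G.farFinset c) + #(G.shortLegFinset c) ≤ G.degree c := by
  have hshort : G.shortLegFinset c ⊆ G.neighborFinset c := Finset.filter_subset _ _
  have hfar_le : #(G.farFinset c) ≤ #(G.neighborFinset c \ G.shortLegFinset c) := by
    refine Finset.card_le_card_of_forall_subsingleton (fun v u => G.Adj u v) (fun v hv => ?_)
      (fun u hu => ?_)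
    · obtain ⟨u, hcu, huv⟩ := hfar v hv
      refine ⟨u, Finset.mem_sdiff.mpr ⟨(G.mem_neighborFinset c u).mpr hcu, fun hshort => ?_⟩, huv⟩
      exact (mem_shortLegFinset.mp hshort).2 v hv huv
    · obtain ⟨hcu, -⟩ := Finset.mem_sdiff.mp hu
      rw [mem_neighborFinset] at hcu
      rintro v₁ ⟨hv₁, huv₁⟩ v₂ ⟨hv₂, huv₂⟩
      exact eq_of_adj_of_degree_le_two (hdeg u hcu) huv₁ huv₂ hcu.symm
        (fun h => (mem_farFinset.mp hv₁).1 h.symm) (fun h => (mem_farFinset.mp hv₂).1 h.symm)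
  rw [← card_neighborFinset_eq_degree, ← Finset.card_sdiff_add_card_eq_card hshort]
  omega

theorem IsSpider.exists_adj_adj_of_mem_farFinset {v : V} (h : G.IsSpider c)
    (hv : v ∈ G.farFinset c) : ∃ u, G.Adj c u ∧ G.Adj u v := by
  obtain ⟨hvc, hcv⟩ := mem_farFinset.mp hv
  have hconn := h.1.connected
  have hdist : G.dist c v = 2 :=
    le_antisymm (h.2.2 v hvc).2.1 (hconn.one_lt_dist_of_ne_of_not_adj (Ne.symm hvc) hcv)
  have hedist : G.edist c v = 2 := by
    rw [← (hconn.preconnected c v).coe_dist_eq_edist, hdist]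
    rfl
  obtain ⟨u, hu⟩ := (edist_eq_two_iff.mp hedist).2.2
  obtain ⟨hcu, hvu⟩ := G.mem_commonNeighbors.mp hu
  exact ⟨u, hcu, hvu.symm⟩

theorem IsSpider.nonempty_iso_pathGraph_four (h : G.IsSpider c)
    (hcard : Fintype.card V = 4) (hfar : #(G.farFinset c) = 1)
    (hshort : #(G.shortLegFinset c) = 1) : Nonempty (G ≃g pathGraph 4) := by
  obtain ⟨l, hl⟩ := Finset.card_eq_one.mp hfar
  obtain ⟨p, hp⟩ := Finset.card_eq_one.mp hshort
  have hlfar : l ∈ G.farFinset c := hl ▸ Finset.mem_singleton_self l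
  obtain ⟨hcp, hpfar⟩ := mem_shortLegFinset.mp (hp ▸ Finset.mem_singleton_self p)
  obtain ⟨m, hcm, hml⟩ := h.exists_adj_adj_of_mem_farFinset hlfar
  have hpm : ¬G.Adj p m := fun hpm =>
    h.1.isAcyclic.cliqueFree le_rfl {p, c, m} (is3Clique_triple_iff.mpr ⟨hcp.symm, hpm, hcm⟩)
  exact nonempty_iso_pathGraph_four_of_adj hcard hcp.symm hcm hml hpm (hpfar l hlfar)
    (mem_farFinset.mp hlfar).2

end Legs

end SimpleGraph

theorem rainbow2_spider_general {V : Type*} [Fintype V] (G : SimpleGraph V)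
    [DecidableRel G.Adj] (c : V) (h : G.IsSpider c) :
    4 * G.rainbowNum 2 ≤ 3 * Fintype.card V ∧
      (4 * G.rainbowNum 2 = 3 * Fintype.card V ↔
        Nonempty (G ≃g SimpleGraph.pathGraph 4)) := by
  classical
  have horder := G.card_eq_one_add_degree_add_card_farFinset c
  have hlegs := G.card_farFinset_add_card_shortLegFinset_le_degree
    (fun _ hv => h.exists_adj_adj_of_mem_farFinset hv) fun u hcu => (h.2.2 u hcu.ne').1
  have h₁ := G.rainbowNum_le_two_add_card_farFinset c
  have h₂ := G.rainbowNum_le_one_add_card_farFinset_add_card_shortLegFinset c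
  have hdeg := h.2.1
  refine ⟨by omega, fun heq => h.nonempty_iso_pathGraph_four (by omega) (by omega) (by omega),
    fun ⟨e⟩ => ?_⟩
  rw [e.rainbowNum_eq, SimpleGraph.rainbowNum_pathGraph_four, Fintype.card_congr e.toEquiv,
    Fintype.card_fin]

/-- For a spider `G` of order `n ≥ 3`, `γ_{r2}(G) ≤ 3n/4`, with equality iff `G` is
the path on four vertices. -/
theorem rainbow2_spider {V : Type*} [Fintype V] (G : SimpleGraph V)
    [DecidableRel G.Adj] (c : V) (h : G.IsSpider c) (hn : 3 ≤ Fintype.card V) :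
    4 * G.rainbowNum 2 ≤ 3 * Fintype.card V ∧
      (4 * G.rainbowNum 2 = 3 * Fintype.card V ↔
        Nonempty (G ≃g SimpleGraph.pathGraph 4)) :=
  rainbow2_spider_general G c h
end

section
/- Every connected graph G of order n ≥ 3 satisfies γ_{r2}(G) ≤ 3n/4. -/
open Finset

/-!
Fix a root `r`; a child of `v` is a neighbour one layer farther from `r`. Label every vertex by
its distance from `r` modulo 4 with `{0, 1}` or `{1}`, then `∅`, `{0}`, and `{1}` or `∅`, for
the residues `0, 1, 2, 3`, where the first option is taken by a vertex with a childless child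
(residue `0`), respectively by a childless vertex (residue `3`). An empty vertex on layer
`1 (mod 4)` takes colour `1` from its parent, and colour `0` from its parent or, failing that,
from a child; an empty vertex on layer `3 (mod 4)` has a child, and takes `0` from its parent
and `1` from the child. So each of the four cyclic shifts of the pattern is a 2-rainbow
dominating function except at the root, which has no parent, and a vertex receives total
weight at most `3` over the four shifts. Patching the root, or a childless child of it, in the
shifts where the root is empty keeps the total weight at most `3n` (a case distinction on the
children of the root), so one of the four shifts weighs at most `3n / 4`.
-/

theorem Fintype.sum_le_mul_card_of_pair {α : Type*} [Fintype α] [DecidableEq α] {g : α → ℕ}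
    {m : ℕ} {a b : α} (hab : a ≠ b) (hpair : g a + g b ≤ 2 * m)
    (hrest : ∀ v, v ≠ a → v ≠ b → g v ≤ m) :
    ∑ v, g v ≤ m * Fintype.card α := by
  have hb : b ∈ univ.erase a := mem_erase.mpr ⟨hab.symm, mem_univ b⟩
  have hcard : ((univ.erase a).erase b).card + 1 + 1 = Fintype.card α := by
    rw [card_erase_add_one hb, card_erase_add_one (mem_univ a), card_univ]
  have hsum : ∑ v ∈ (univ.erase a).erase b, g v ≤ ((univ.erase a).erase b).card * m :=
    sum_le_card_nsmul _ _ _ fun v hv => by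
      simp only [mem_erase] at hv
      exact hrest v hv.2.1 hv.1
  rw [← add_sum_erase _ _ (mem_univ a), ← add_sum_erase _ _ hb, ← hcard]
  nlinarith

namespace SimpleGraph

variable {V : Type*}

theorem rainbowNum_le_sum_card [Fintype V] (G : SimpleGraph V) {k : ℕ}
    {f : V → Finset (Fin k)} (hf : G.IsRainbowDF f) :
    G.rainbowNum k ≤ ∑ v, (f v).card :=
  Nat.sInf_le ⟨f, hf, rfl⟩

theorem card_mul_rainbowNum_le_sum [Fintype V] (G : SimpleGraph V) {k : ℕ} {ι : Type*}
    [Fintype ι] (F : ι → V → Finset (Fin k)) (hF : ∀ i, G.IsRainbowDF (F i)) :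
    Fintype.card ι * G.rainbowNum k ≤ ∑ v, ∑ i, (F i v).card := by
  rw [sum_comm]
  simpa [← card_univ] using sum_le_sum fun i _ => G.rainbowNum_le_sum_card (hF i)

-- Makes `(n : Fin 4)` available; it is `n % 4`, the layer residue.
open Fin.NatCast

variable (G : SimpleGraph V) (r : V)

def IsBFSChild (v u : V) : Prop := G.Adj v u ∧ G.dist r u = G.dist r v + 1

def IsBFSLeaf (v : V) : Prop := ∀ u, ¬ G.IsBFSChild r v u

def HasBFSLeafChild (v : V) : Prop := ∃ u, G.IsBFSChild r v u ∧ G.IsBFSLeaf r u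

open Classical in
noncomputable def layerColors (v : V) : Fin 4 → Finset (Fin 2) :=
  ![if G.HasBFSLeafChild r v then univ else {1}, ∅, {0}, if G.IsBFSLeaf r v then {1} else ∅]

noncomputable def layerColoring (t : Fin 4) (v : V) : Finset (Fin 2) :=
  G.layerColors r v ((G.dist r v : Fin 4) + t)

variable {G r} {u v x : V} {t : Fin 4}

theorem isBFSChild_self_iff : G.IsBFSChild r r u ↔ G.Adj r u := by
  simp [IsBFSChild]

theorem IsBFSChild.cast_dist_add (h : G.IsBFSChild r v u) (t : Fin 4) :
    (G.dist r u : Fin 4) + t = ((G.dist r v : Fin 4) + t) + 1 := by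
  rw [h.2]
  push_cast
  abel

theorem IsBFSLeaf.not_hasBFSLeafChild (h : G.IsBFSLeaf r v) : ¬ G.HasBFSLeafChild r v :=
  fun ⟨u, hu, _⟩ => h u hu

theorem not_isBFSLeaf_self (hu : G.Adj r u) : ¬ G.IsBFSLeaf r r :=
  fun h => h u (isBFSChild_self_iff.mpr hu)

theorem not_hasBFSLeafChild_self (h : ∀ x, G.Adj r x → ¬ G.IsBFSLeaf r x) :
    ¬ G.HasBFSLeafChild r r :=
  fun ⟨x, hx, hleaf⟩ => h x (isBFSChild_self_iff.mp hx) hleaf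

theorem Connected.exists_isBFSChild (hG : G.Connected) (hv : v ≠ r) :
    ∃ p, G.IsBFSChild r p v := by
  obtain ⟨w, hw⟩ := hG.exists_walk_length_eq_dist v r
  cases w with
  | nil => exact absurd rfl hv
  | @cons _ p _ hadj w =>
    have hlen : G.dist r p ≤ w.length := dist_comm (G := G) ▸ dist_le w
    have hpos : 0 < G.dist r v := hG.pos_dist_of_ne hv.symm
    rw [Walk.length_cons, dist_comm] at hw
    refine ⟨p, hadj.symm, ?_⟩
    have := hadj.diff_dist_adj (u := r)
    omega

theorem Connected.exists_adj_and_eq_or_not_isBFSLeaf (hG : G.Connected) (hv : v ≠ r) :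
    ∃ y, G.Adj r y ∧ (y = v ∨ ¬ G.IsBFSLeaf r y) := by
  induction hd : G.dist r v using Nat.strong_induction_on generalizing v with
  | _ n ih =>
  obtain ⟨p, hp⟩ := hG.exists_isBFSChild hv
  by_cases hpr : p = r
  · subst hpr
    exact ⟨v, isBFSChild_self_iff.mp hp, .inl rfl⟩
  obtain ⟨y, hy, hyp⟩ := ih _ (by rw [← hd, hp.2]; omega) hpr rfl
  refine ⟨y, hy, .inr fun hleaf => ?_⟩
  rcases hyp with rfl | hyp
  exacts [hleaf v hp, hyp hleaf]

theorem layerColors_eq_empty_iff {p : Fin 4} :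
    G.layerColors r v p = ∅ ↔ p = 1 ∨ p = 3 ∧ ¬ G.IsBFSLeaf r v := by
  fin_cases p <;> simp [layerColors, apply_ite (· = (∅ : Finset (Fin 2))), univ_eq_empty_iff]

theorem one_mem_layerColors_zero : 1 ∈ G.layerColors r v 0 := by
  simp only [layerColors]
  split_ifs <;> simp

theorem layerColors_zero_of_hasBFSLeafChild (h : G.HasBFSLeafChild r v) :
    G.layerColors r v 0 = univ := by
  simp [layerColors, h]

theorem layerColoring_self : G.layerColoring r t r = G.layerColors r r t := by
  simp [layerColoring]

theorem layerColoring_of_adj (h : G.Adj r v) :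
    G.layerColoring r t v = G.layerColors r v (1 + t) := by
  simp [layerColoring, dist_eq_one_iff_adj.mpr h]

theorem Connected.exists_mem_layerColoring_of_eq_empty (hG : G.Connected) (hv : v ≠ r)
    (h : G.layerColoring r t v = ∅) (c : Fin 2) :
    ∃ u, c ∈ G.layerColoring r t u ∧ (G.IsBFSChild r u v ∨ G.IsBFSChild r v u) := by
  obtain ⟨p, hp⟩ := hG.exists_isBFSChild hv
  have hpv := hp.cast_dist_add t
  rw [layerColoring, layerColors_eq_empty_iff] at h
  rcases h with h | ⟨h, hleaf⟩
  · have hp0 : (G.dist r p : Fin 4) + t = 0 := by omega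
    fin_cases c
    · by_cases hpl : G.HasBFSLeafChild r p
      · refine ⟨p, ?_, .inl hp⟩
        simp [layerColoring, hp0, layerColors_zero_of_hasBFSLeafChild hpl]
      obtain ⟨u, hu⟩ : ∃ u, G.IsBFSChild r v u := by
        by_contra! hvl
        exact hpl ⟨v, hp, hvl⟩
      refine ⟨u, ?_, .inr hu⟩
      rw [layerColoring, hu.cast_dist_add, h]
      simp [layerColors]
    · exact ⟨p, by simpa [layerColoring, hp0] using one_mem_layerColors_zero, .inl hp⟩
  · fin_cases c
    · have hp2 : (G.dist r p : Fin 4) + t = 2 := by omega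
      exact ⟨p, by simp [layerColoring, hp2, layerColors], .inl hp⟩
    · obtain ⟨u, hu⟩ : ∃ u, G.IsBFSChild r v u := by
        by_contra! hvl
        exact hleaf hvl
      refine ⟨u, ?_, .inr hu⟩
      rw [layerColoring, hu.cast_dist_add, h]
      simpa using one_mem_layerColors_zero

theorem Connected.layerColoring_isRainbowDF (hG : G.Connected)
    (hroot : G.layerColoring r t r = ∅ →
      ∀ c, ∃ u, G.Adj r u ∧ c ∈ G.layerColoring r t u) :
    G.IsRainbowDF (G.layerColoring r t) := by
  intro v hv c
  by_cases hvr : v = r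
  · subst hvr
    exact hroot hv c
  obtain ⟨u, hu, hrel⟩ := hG.exists_mem_layerColoring_of_eq_empty hvr hv c
  exact ⟨u, hrel.elim (fun h => h.1.symm) (fun h => h.1), hu⟩

theorem Connected.layerColoring_isRainbowDF_of_even (hG : G.Connected) (ht : t = 0 ∨ t = 2) :
    G.IsRainbowDF (G.layerColoring r t) :=
  hG.layerColoring_isRainbowDF fun h => by
    rw [layerColoring_self, layerColors_eq_empty_iff] at h
    omega

/-- Relabelling a vertex is harmless if that vertex never serves as the witness found in
`exists_mem_layerColoring_of_eq_empty`. -/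
theorem Connected.update_layerColoring_isRainbowDF [DecidableEq V] (hG : G.Connected)
    {S : Finset (Fin 2)} (hS : S.Nonempty)
    (hx : G.layerColoring r t x = ∅ ∨ G.Adj r x ∧ G.IsBFSLeaf r x)
    (hroot : Function.update (G.layerColoring r t) x S r = ∅ →
      ∀ c, ∃ u, G.Adj r u ∧ c ∈ Function.update (G.layerColoring r t) x S u) :
    G.IsRainbowDF (Function.update (G.layerColoring r t) x S) := by
  intro v hv c
  by_cases hvr : v = r
  · subst hvr
    exact hroot hv c
  have hvx : v ≠ x := by
    rintro rfl
    exact hS.ne_empty (by simpa using hv)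
  rw [Function.update_of_ne hvx] at hv
  obtain ⟨u, hu, hrel⟩ := hG.exists_mem_layerColoring_of_eq_empty hvr hv c
  have hux : u ≠ x := by
    rintro rfl
    rcases hx with hx | ⟨hadj, hleaf⟩
    · simp [hx] at hu
    rcases hrel with h | h
    · exact hleaf v h
    · have h1 := dist_eq_one_iff_adj.mpr hadj
      have h2 := hG.pos_dist_of_ne (Ne.symm hvr)
      have h3 := h.2
      omega
  exact ⟨u, hrel.elim (fun h => h.1.symm) (fun h => h.1), by rwa [Function.update_of_ne hux]⟩

theorem Connected.update_self_layerColoring_isRainbowDF [DecidableEq V] (hG : G.Connected)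
    {S : Finset (Fin 2)} (hS : S.Nonempty) (h : G.layerColoring r t r = ∅) :
    G.IsRainbowDF (Function.update (G.layerColoring r t) r S) :=
  hG.update_layerColoring_isRainbowDF hS (.inl h) fun hr => by simp [hS.ne_empty] at hr

theorem sum_card_layerColoring (v : V) :
    ∑ t, (G.layerColoring r t v).card = ∑ p, (G.layerColors r v p).card :=
  Fintype.sum_equiv (Equiv.addLeft (G.dist r v : Fin 4)) _ _ fun _ => rfl

theorem sum_card_layerColoring_le_three (v : V) : ∑ t, (G.layerColoring r t v).card ≤ 3 := by
  rw [sum_card_layerColoring, Fin.sum_univ_four]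
  by_cases hleaf : G.IsBFSLeaf r v
  · simp [layerColors, hleaf, hleaf.not_hasBFSLeafChild]
  · simp only [layerColors]
    split_ifs <;> simp

theorem sum_card_layerColoring_eq_two (hleaf : ¬ G.IsBFSLeaf r v)
    (hchild : ¬ G.HasBFSLeafChild r v) : ∑ t, (G.layerColoring r t v).card = 2 := by
  rw [sum_card_layerColoring, Fin.sum_univ_four]
  simp [layerColors, hleaf, hchild]

section RootCases

variable [Fintype V] [DecidableEq V]

/-- Patch the leaf child `x` of the root in the two shifts where the root is empty. -/
theorem Connected.four_mul_rainbowNum_le_of_isBFSLeaf (hG : G.Connected)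
    (hn : 3 ≤ Fintype.card V) (hx : G.Adj r x) (hleaf : G.IsBFSLeaf r x) :
    4 * G.rainbowNum 2 ≤ 3 * Fintype.card V := by
  obtain ⟨z, -, hz⟩ := exists_mem_notMem_of_card_lt_card (s := {r, x}) (t := univ)
    (by rw [card_univ]; exact card_le_two.trans_lt (by omega))
  simp only [mem_insert, mem_singleton, not_or] at hz
  obtain ⟨y, hy, hyz⟩ := hG.exists_adj_and_eq_or_not_isBFSLeaf hz.1
  have hyx : y ≠ x := by
    rintro rfl
    rcases hyz with rfl | h
    exacts [hz.2 rfl, h hleaf]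
  set F := ![G.layerColoring r 0, Function.update (G.layerColoring r 1) x {1},
    G.layerColoring r 2, Function.update (G.layerColoring r 3) x {0}]
  have hF : ∀ t, G.IsRainbowDF (F t) := by
    intro t
    fin_cases t
    · exact hG.layerColoring_isRainbowDF_of_even (.inl rfl)
    · refine hG.update_layerColoring_isRainbowDF (by simp) (.inr ⟨hx, hleaf⟩) fun _ c => ?_
      fin_cases c
      · refine ⟨y, hy, ?_⟩
        simp [Function.update_of_ne hyx, layerColoring_of_adj hy, layerColors]
      · exact ⟨x, hx, by simp⟩
    · exact hG.layerColoring_isRainbowDF_of_even (.inr rfl)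
    · refine hG.update_layerColoring_isRainbowDF (by simp) (.inr ⟨hx, hleaf⟩) fun _ c => ?_
      fin_cases c
      · exact ⟨x, hx, by simp⟩
      · exact ⟨y, hy, by simpa [Function.update_of_ne hyx, layerColoring_of_adj hy]
          using one_mem_layerColors_zero⟩
  have hweight : ∑ v, ∑ t, (F t v).card ≤ 3 * Fintype.card V := by
    refine (sum_le_card_nsmul _ _ 3 fun v _ => ?_).trans (by simp [mul_comm])
    by_cases hvx : v = x
    · subst hvx
      simp [F, Fin.sum_univ_four, layerColoring_of_adj hx, layerColors, hleaf,
        hleaf.not_hasBFSLeafChild]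
    · simpa [F, Fin.sum_univ_four, Function.update_of_ne hvx]
        using sum_card_layerColoring_le_three (G := G) (r := r) v
  simpa using (G.card_mul_rainbowNum_le_sum F hF).trans hweight

theorem Connected.four_mul_rainbowNum_le_of_hasBFSLeafChild (hG : G.Connected)
    (hA : ∀ x, G.Adj r x → ¬ G.IsBFSLeaf r x) (hu : G.Adj r u)
    (hchild : G.HasBFSLeafChild r u) :
    4 * G.rainbowNum 2 ≤ 3 * Fintype.card V := by
  set F := ![G.layerColoring r 0, Function.update (G.layerColoring r 1) r {1},
    G.layerColoring r 2, G.layerColoring r 3]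
  have hF : ∀ t, G.IsRainbowDF (F t) := by
    intro t
    fin_cases t
    · exact hG.layerColoring_isRainbowDF_of_even (.inl rfl)
    · exact hG.update_self_layerColoring_isRainbowDF (by simp)
        (by simp [layerColoring_self, layerColors])
    · exact hG.layerColoring_isRainbowDF_of_even (.inr rfl)
    · exact hG.layerColoring_isRainbowDF (t := 3) fun _ _ => ⟨u, hu, by
        simp [layerColoring_of_adj hu, layerColors_zero_of_hasBFSLeafChild hchild]⟩
  have hweight : ∑ v, ∑ t, (F t v).card ≤ 3 * Fintype.card V := by
    refine (sum_le_card_nsmul _ _ 3 fun v _ => ?_).trans (by simp [mul_comm])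
    by_cases hvr : v = r
    · subst hvr
      simp [F, Fin.sum_univ_four, layerColoring_self, layerColors, not_hasBFSLeafChild_self hA,
        not_isBFSLeaf_self hu]
    · simpa [F, Fin.sum_univ_four, Function.update_of_ne hvr]
        using sum_card_layerColoring_le_three (G := G) (r := r) v
  simpa using (G.card_mul_rainbowNum_le_sum F hF).trans hweight

/-- Here the root gets weight `4` over the four shifts, balanced by the weight `2` of `u`. -/
theorem Connected.four_mul_rainbowNum_le_of_not_hasBFSLeafChild (hG : G.Connected)
    (hA : ∀ x, G.Adj r x → ¬ G.IsBFSLeaf r x)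
    (hB : ∀ u, G.Adj r u → ¬ G.HasBFSLeafChild r u) (hu : G.Adj r u) :
    4 * G.rainbowNum 2 ≤ 3 * Fintype.card V := by
  set F := ![G.layerColoring r 0, Function.update (G.layerColoring r 1) r {1},
    G.layerColoring r 2, Function.update (G.layerColoring r 3) r {0}]
  have hF : ∀ t, G.IsRainbowDF (F t) := by
    intro t
    fin_cases t
    · exact hG.layerColoring_isRainbowDF_of_even (.inl rfl)
    · exact hG.update_self_layerColoring_isRainbowDF (by simp)
        (by simp [layerColoring_self, layerColors])
    · exact hG.layerColoring_isRainbowDF_of_even (.inr rfl)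
    · exact hG.update_self_layerColoring_isRainbowDF (by simp)
        (by simp [layerColoring_self, layerColors, not_isBFSLeaf_self hu])
  have hweight : ∑ v, ∑ t, (F t v).card ≤ 3 * Fintype.card V := by
    refine Fintype.sum_le_mul_card_of_pair hu.ne ?_ fun v hvr _ => ?_
    · have hu2 := sum_card_layerColoring_eq_two (hA u hu) (hB u hu)
      rw [Fin.sum_univ_four] at hu2
      simp [F, Fin.sum_univ_four, Function.update_of_ne hu.ne', layerColoring_self, layerColors,
        not_hasBFSLeafChild_self hA, not_isBFSLeaf_self hu, hu2]
    · simpa [F, Fin.sum_univ_four, Function.update_of_ne hvr]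
        using sum_card_layerColoring_le_three (G := G) (r := r) v
  simpa using (G.card_mul_rainbowNum_le_sum F hF).trans hweight

end RootCases

end SimpleGraph

/-- Every connected graph of order `n ≥ 3` satisfies `γ_{r2}(G) ≤ 3n/4`. -/
theorem rainbow2_le_three_quarters_of_connected {V : Type*} [Fintype V]
    (G : SimpleGraph V) (hG : G.Connected) (hn : 3 ≤ Fintype.card V) :
    4 * G.rainbowNum 2 ≤ 3 * Fintype.card V := by
  classical
  obtain ⟨r⟩ : Nonempty V := Fintype.card_pos_iff.mp (by omega)
  obtain ⟨v, hv⟩ := Fintype.exists_ne_of_one_lt_card (by omega) r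
  obtain ⟨u, hu, -⟩ := hG.exists_adj_and_eq_or_not_isBFSLeaf hv
  by_cases hA : ∃ x, G.Adj r x ∧ G.IsBFSLeaf r x
  · obtain ⟨x, hx, hleaf⟩ := hA
    exact hG.four_mul_rainbowNum_le_of_isBFSLeaf hn hx hleaf
  by_cases hB : ∃ w, G.Adj r w ∧ G.HasBFSLeafChild r w
  · obtain ⟨w, hw, hchild⟩ := hB
    exact hG.four_mul_rainbowNum_le_of_hasBFSLeafChild (fun x hx h => hA ⟨x, hx, h⟩) hw hchild
  exact hG.four_mul_rainbowNum_le_of_not_hasBFSLeafChild (fun x hx h => hA ⟨x, hx, h⟩)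
    (fun w hw h => hB ⟨w, hw, h⟩) hu
end

section
/- Let G be a graph containing an induced subgraph H isomorphic to P₄ such that no vertex of H other than a fixed center vertex of H has a neighbor in G outside H. Then every 2-rainbow dominating function of G has weight at least 3 on V(H). -/
open Finset

open SimpleGraph

/-- If `G` contains an induced `P₄` on a vertex set `S` such that no vertex of `S`
other than a fixed center `c` (an internal vertex of the `P₄`) has a neighbor outside
`S`, then every 2-rainbow dominating function of `G` has weight at least 3 on `S`. -/
theorem rainbow2_weight_on_pendant_P4 {V : Type*} [Fintype V] [DecidableEq V]
    (G : SimpleGraph V) [DecidableRel G.Adj] (S : Finset V) (c : V) (hc : c ∈ S)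
    (hiso : Nonempty (SimpleGraph.induce (S : Set V) G ≃g SimpleGraph.pathGraph 4))
    (hcenter : (S.filter fun u => G.Adj c u).card = 2)
    (hout : ∀ v ∈ S, v ≠ c → ∀ u, G.Adj v u → u ∈ S)
    (f : V → Finset (Fin 2)) (hf : G.IsRainbowDF f) :
    3 ≤ ∑ v ∈ S, (f v).card := by
  obtain ⟨e⟩ := hiso
  set x : Fin 4 → V := fun i => ((e.symm i : (S : Set V)) : V) with hxdef
  have hxS : ∀ i, x i ∈ S := fun i => (e.symm i).2
  have hinj : Function.Injective x := by
    intro i j h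
    exact e.symm.injective (Subtype.ext h)
  have hadj : ∀ i j, G.Adj (x i) (x j) ↔ (pathGraph 4).Adj i j := by
    intro i j
    exact e.symm.map_adj_iff
  have hScard : S.card = 4 := by
    have := Fintype.card_congr e.toEquiv
    simpa using this
  have hSim : S = Finset.image x Finset.univ := by
    apply (Finset.eq_of_subset_of_card_le _ _).symm
    · intro v hv
      obtain ⟨i, _, rfl⟩ := Finset.mem_image.mp hv
      exact hxS i
    · rw [hScard, Finset.card_image_of_injective _ hinj]
      simp
  obtain ⟨k, -, hk⟩ := Finset.mem_image.mp (hSim ▸ hc)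
  -- domination transfer for non-center vertices
  have hdom : ∀ i : Fin 4, x i ≠ c → f (x i) = ∅ →
      ∀ col : Fin 2, ∃ j, (pathGraph 4).Adj i j ∧ col ∈ f (x j) := by
    intro i hic hfi col
    obtain ⟨u, hu, hcol⟩ := hf (x i) hfi col
    have huS : u ∈ S := hout (x i) (hxS i) hic u hu
    obtain ⟨j, -, rfl⟩ := Finset.mem_image.mp (hSim ▸ huS)
    exact ⟨j, (hadj i j).mp hu, hcol⟩
  have hsum : ∑ v ∈ S, (f v).card = ∑ i : Fin 4, (f (x i)).card := by
    rw [hSim, Finset.sum_image (fun a _ b _ h => hinj h)]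
  rw [hsum, Fin.sum_univ_four]
  -- path adjacency facts
  have adj0 : ∀ j : Fin 4, (pathGraph 4).Adj 0 j → j = 1 := by
    simp only [pathGraph_adj]; decide
  have adj3 : ∀ j : Fin 4, (pathGraph 4).Adj 3 j → j = 2 := by
    simp only [pathGraph_adj]; decide
  have adj1 : ∀ j : Fin 4, (pathGraph 4).Adj 1 j → j = 0 ∨ j = 2 := by
    simp only [pathGraph_adj]; decide
  have adj2 : ∀ j : Fin 4, (pathGraph 4).Adj 2 j → j = 1 ∨ j = 3 := by
    simp only [pathGraph_adj]; decide
  have cardfull : ∀ s : Finset (Fin 2), ((0 : Fin 2) ∈ s) → ((1 : Fin 2) ∈ s) → s.card = 2 := by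
    intro s h0 h1
    have : s = Finset.univ := by
      apply Finset.eq_univ_iff_forall.mpr
      intro a
      fin_cases a <;> assumption
    simp [this]
  have cardpos : ∀ s : Finset (Fin 2), s ≠ ∅ → 1 ≤ s.card := by
    intro s hs
    exact Finset.card_pos.mpr (Finset.nonempty_iff_ne_empty.mpr hs)
  -- rule out k = 0 and k = 3
  have hknot0 : k ≠ 0 := by
    intro h
    have hfil : S.filter (fun u => G.Adj c u) = {x 1} := by
      ext u
      simp only [Finset.mem_filter, Finset.mem_singleton]
      constructor
      · rintro ⟨huS, hadju⟩
        obtain ⟨j, -, rfl⟩ := Finset.mem_image.mp (hSim ▸ huS)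
        rw [← hk, h] at hadju
        rw [adj0 j ((hadj 0 j).mp hadju)]
      · rintro rfl
        refine ⟨hxS 1, ?_⟩
        rw [← hk, h, hadj]
        rw [pathGraph_adj]; decide
    rw [hfil] at hcenter
    simp at hcenter
  have hknot3 : k ≠ 3 := by
    intro h
    have hfil : S.filter (fun u => G.Adj c u) = {x 2} := by
      ext u
      simp only [Finset.mem_filter, Finset.mem_singleton]
      constructor
      · rintro ⟨huS, hadju⟩
        obtain ⟨j, -, rfl⟩ := Finset.mem_image.mp (hSim ▸ huS)
        rw [← hk, h] at hadju
        rw [adj3 j ((hadj 3 j).mp hadju)]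
      · rintro rfl
        refine ⟨hxS 2, ?_⟩
        rw [← hk, h, hadj]
        rw [pathGraph_adj]; decide
    rw [hfil] at hcenter
    simp at hcenter
  have hne : ∀ i : Fin 4, i ≠ k → x i ≠ c := by
    intro i hik h
    exact hik (hinj (h.trans hk.symm))
  -- two cases: k = 1 or k = 2
  have hk12 : k = 1 ∨ k = 2 := by
    fin_cases k
    · exact absurd rfl hknot0
    · exact Or.inl rfl
    · exact Or.inr rfl
    · exact absurd rfl hknot3
  -- generic endpoint lemma: if f(x i)=∅ at an endpoint with unique neighbor j, then f(x j) full
  have endfull : ∀ i j : Fin 4, x i ≠ c → (∀ m, (pathGraph 4).Adj i m → m = j) →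
      f (x i) = ∅ → (f (x j)).card = 2 := by
    intro i j hic huniq hfi
    apply cardfull
    · obtain ⟨m, hm, hcol⟩ := hdom i hic hfi 0
      rwa [huniq m hm] at hcol
    · obtain ⟨m, hm, hcol⟩ := hdom i hic hfi 1
      rwa [huniq m hm] at hcol
  -- generic inner lemma: if f(x i)=∅ and neighbors of i among {j₁, j₂}, colors split
  have innersplit : ∀ i j₁ j₂ : Fin 4, x i ≠ c →
      (∀ m, (pathGraph 4).Adj i m → m = j₁ ∨ m = j₂) →
      f (x i) = ∅ → 2 ≤ (f (x j₁)).card + (f (x j₂)).card := by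
    intro i j₁ j₂ hic hnb hfi
    have hsub : (Finset.univ : Finset (Fin 2)) ⊆ f (x j₁) ∪ f (x j₂) := by
      intro col _
      obtain ⟨m, hm, hcol⟩ := hdom i hic hfi col
      rcases hnb m hm with rfl | rfl
      · exact Finset.mem_union_left _ hcol
      · exact Finset.mem_union_right _ hcol
    calc (2 : ℕ) = (Finset.univ : Finset (Fin 2)).card := by simp
      _ ≤ (f (x j₁) ∪ f (x j₂)).card := Finset.card_le_card hsub
      _ ≤ (f (x j₁)).card + (f (x j₂)).card := Finset.card_union_le _ _
  rcases hk12 with rfl | rfl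
  · -- center is x 1 : noncenters are 0, 2, 3
    have h0c := hne 0 (by decide)
    have h2c := hne 2 (by decide)
    have h3c := hne 3 (by decide)
    by_cases h0 : f (x 0) = ∅
    · have hfull1 := endfull 0 1 h0c adj0 h0
      by_cases h3 : f (x 3) = ∅
      · have hfull2 := endfull 3 2 h3c adj3 h3
        omega
      · have := cardpos _ h3
        omega
    · have hp0 := cardpos _ h0
      by_cases h3 : f (x 3) = ∅
      · have hfull2 := endfull 3 2 h3c adj3 h3
        omega
      · have hp3 := cardpos _ h3
        by_cases h2 : f (x 2) = ∅
        · have := innersplit 2 1 3 h2c adj2 h2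
          omega
        · have := cardpos _ h2
          omega
  · -- center is x 2 : noncenters are 0, 1, 3
    have h0c := hne 0 (by decide)
    have h1c := hne 1 (by decide)
    have h3c := hne 3 (by decide)
    by_cases h3 : f (x 3) = ∅
    · have hfull2 := endfull 3 2 h3c adj3 h3
      by_cases h0 : f (x 0) = ∅
      · have hfull1 := endfull 0 1 h0c adj0 h0
        omega
      · have := cardpos _ h0
        omega
    · have hp3 := cardpos _ h3
      by_cases h0 : f (x 0) = ∅
      · have hfull1 := endfull 0 1 h0c adj0 h0
        omega
      · have hp0 := cardpos _ h0
        by_cases h1 : f (x 1) = ∅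
        · have := innersplit 1 0 2 h1c adj1 h1
          omega
        · have := cardpos _ h1
          omega
end
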